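/- Define rational functions F n j ∈ ℚ(z) (for 1 ≤ j ≤ n−1) by F n j = (−1)^(j−1) · z^j · (r (n−j))(z²) / ((r n)(z²) + 2·z² · (r (n−1))(z²)). Then for every n ≥ 3 and every j with 1 ≤ j ≤ n−2, the relation F n j = z · F n (j+1) + Σ_{k=2}^{j} (−1)^k · z^k · F n (j+2−k) + (−1)^(j−1) · z^j holds (the relation obtained by grouping paths according to the location of the first right move). -/

import Mathlib

/-!
Put `x = z²`, `c = n - j - 2` and `D = r_n(x) + 2 x r_{n-1}(x)`, which is nonzero because
`r_m(0) = 1` for `m ≥ 1`. Every term of the relation is a multiple of `1 / D`; after clearing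
`D` and the common factor `(-1)^(j-1) z^j` it becomes
`r_{c+2} + x r_{c+1} = x ∑_{k=2}^{j} r_{c+k} + r_n + 2 x r_{n-1}` (evaluated at `x`).
With `P m = r_{m+1} + 2 x r_m` the recurrence reads `P (m + 1) = P m - x r_m`, and the identity
is this relation summed over `c + 2 ≤ m ≤ n - 2`, since `P (c + 2) = r_{c+2} + x r_{c+1}`.
-/

open Polynomial

/-- The polynomials `r k ∈ ℚ[X]` defined by `r 0 = 0`, `r 1 = 1`,
`r (k+2) = (1 - 2X) r (k+1) + X r k`. -/
noncomputable def r : ℕ → Polynomial ℚ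
  | 0 => 0
  | 1 => 1
  | (k + 2) => (1 - 2 * X) * r (k + 1) + X * r k

/-- The rational functions `F n j = (-1)^(j-1) z^j r_{n-j}(z²) / (r_n(z²) + 2z² r_{n-1}(z²))`
in `ℚ(z)`; these are the path-count generating functions `f_j^{(n)}`. -/
noncomputable def F (n j : ℕ) : RatFunc ℚ :=
  (-1) ^ (j - 1) * RatFunc.X ^ j *
      algebraMap (Polynomial ℚ) (RatFunc ℚ) ((r (n - j)).comp (X ^ 2)) /
    algebraMap (Polynomial ℚ) (RatFunc ℚ)
      ((r n).comp (X ^ 2) + 2 * X ^ 2 * (r (n - 1)).comp (X ^ 2))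

section Recurrence

variable {R : Type*} [CommRing R] {x : R} {s : ℕ → R}

theorem add_mul_eq_mul_sum_add_of_recurrence
    (hs : ∀ m, s (m + 2) = (1 - 2 * x) * s (m + 1) + x * s m) (c : ℕ) {j : ℕ} (hj : 1 ≤ j) :
    s (c + 2) + x * s (c + 1) =
      x * ∑ k ∈ Finset.Icc 2 j, s (c + k) + s (c + 2 + j) + 2 * x * s (c + 1 + j) := by
  induction j, hj using Nat.le_induction with
  | base =>
    simp only [Finset.Icc_eq_empty_of_lt one_lt_two, Finset.sum_empty]
    linear_combination -hs (c + 1)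
  | succ j hj ih =>
    rw [Finset.sum_Icc_succ_top (by omega), ih, show c + (j + 1) = c + 1 + j by omega,
      show c + 1 + (j + 1) = c + 2 + j by omega, show c + 2 + (j + 1) = c + 1 + j + 2 by omega,
      hs, show c + 1 + j + 1 = c + 2 + j by omega]
    ring

end Recurrence

theorem r_add_two (k : ℕ) : r (k + 2) = (1 - 2 * X) * r (k + 1) + X * r k := by
  rw [r]

theorem r_eval_zero {n : ℕ} (hn : 1 ≤ n) : (r n).eval 0 = 1 := by
  obtain ⟨k, rfl⟩ := Nat.exists_eq_add_of_le' hn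
  induction k with
  | zero => simp [r]
  | succ k ih => simp [r_add_two, ih]

noncomputable def rSq (k : ℕ) : RatFunc ℚ :=
  algebraMap ℚ[X] (RatFunc ℚ) ((r k).comp (X ^ 2))

theorem rSq_add_two (k : ℕ) :
    rSq (k + 2) = (1 - 2 * RatFunc.X ^ 2) * rSq (k + 1) + RatFunc.X ^ 2 * rSq k := by
  simp [rSq, r_add_two, RatFunc.algebraMap_X, map_ofNat]

theorem F_eq_rSq (n j : ℕ) :
    F n j = (-1) ^ (j - 1) * RatFunc.X ^ j * rSq (n - j) /
      (rSq n + 2 * RatFunc.X ^ 2 * rSq (n - 1)) := by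
  simp [F, rSq, RatFunc.algebraMap_X, map_ofNat]

theorem rSq_add_mul_rSq_ne_zero {n : ℕ} (hn : 1 ≤ n) :
    rSq n + 2 * RatFunc.X ^ 2 * rSq (n - 1) ≠ 0 := by
  have hpoly : (r n).comp (X ^ 2) + 2 * X ^ 2 * (r (n - 1)).comp (X ^ 2) ≠ 0 := fun h => by
    simpa [eval_comp, r_eval_zero hn] using congrArg (eval 0) h
  simpa [rSq, RatFunc.algebraMap_X, map_ofNat] using RatFunc.algebraMap_ne_zero hpoly

theorem neg_one_pow_mul_X_pow_mul_F {n j k : ℕ} (hjn : j + 2 ≤ n) (hk : k ≤ j + 1) :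
    (-1) ^ k * RatFunc.X ^ k * F n (j + 2 - k) =
      (-1) ^ (j + 1) * RatFunc.X ^ (j + 2) * rSq (n - (j + 2) + k) /
        (rSq n + 2 * RatFunc.X ^ 2 * rSq (n - 1)) := by
  obtain ⟨m, hm⟩ : ∃ m, j + 1 = k + m := ⟨j + 1 - k, by omega⟩
  rw [F_eq_rSq, show j + 2 - k = m + 1 by omega, show n - (m + 1) = n - (j + 2) + k by omega,
    Nat.add_sub_cancel, hm, show j + 2 = k + (m + 1) by omega]
  ring

theorem F_first_right_move_relation_general (n : ℕ) (j : ℕ)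
    (hj : 1 ≤ j) (hjn : j ≤ n - 2) :
    F n j = RatFunc.X * F n (j + 1) +
      (∑ k ∈ Finset.Icc 2 j, (-1 : RatFunc ℚ) ^ k * RatFunc.X ^ k * F n (j + 2 - k)) +
      (-1) ^ (j - 1) * RatFunc.X ^ j := by
  obtain ⟨c, rfl⟩ : ∃ c, n = c + 2 + j := ⟨n - j - 2, by omega⟩
  have key := add_mul_eq_mul_sum_add_of_recurrence rSq_add_two c hj
  have hD := rSq_add_mul_rSq_ne_zero (n := c + 2 + j) (by omega)
  rw [Finset.sum_congr rfl fun k hk =>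
      neg_one_pow_mul_X_pow_mul_F (by omega) ((Finset.mem_Icc.mp hk).2.trans (Nat.le_succ j)),
    ← Finset.sum_div, ← Finset.mul_sum, F_eq_rSq, F_eq_rSq]
  obtain ⟨i, rfl⟩ : ∃ i, j = i + 1 := ⟨j - 1, by omega⟩
  simp only [show c + 2 + (i + 1) - (i + 1) = c + 2 by omega,
    show c + 2 + (i + 1) - (i + 1 + 1) = c + 1 by omega,
    show c + 2 + (i + 1) - (i + 1 + 2) = c by omega,
    show c + 2 + (i + 1) - 1 = c + 1 + (i + 1) by omega, Nat.add_sub_cancel] at hD ⊢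
  field_simp
  linear_combination (-1) ^ i * RatFunc.X ^ (i + 1) * key

/-- The relation obtained by grouping paths according to the location of the
first right move: for `n ≥ 3` and `1 ≤ j ≤ n-2`,
`F n j = z F n (j+1) + ∑_{k=2}^{j} (-1)^k z^k F n (j+2-k) + (-1)^(j-1) z^j`. -/
theorem F_first_right_move_relation (n : ℕ) (hn : 3 ≤ n) (j : ℕ)
    (hj : 1 ≤ j) (hjn : j ≤ n - 2) :
    F n j = RatFunc.X * F n (j + 1) +
      (∑ k ∈ Finset.Icc 2 j, (-1 : RatFunc ℚ) ^ k * RatFunc.X ^ k * F n (j + 2 - k)) +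
      (-1) ^ (j - 1) * RatFunc.X ^ j :=
  F_first_right_move_relation_general n j hj hjn
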